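/- arXiv:1606.05155 — 2 statements merged into one kernel-verified Lean document; each statement's English description precedes it below -/
import Mathlib

section
/- Let α, β be positive integers with gcd(α,β) = 1 and α < β. Then in ℚ⟦q⟧ the formal power series (α·L(q^α) − β·L(q^β))² has constant term (α − β)², and for every integer n ≥ 1 its coefficient of qⁿ equals 240α²σ₃(n/α) + 240β²σ₃(n/β) + 48α(β − 6n)σ(n/α) + 48β(α − 6n)σ(n/β) − 1152αβ·W_{(α,β)}(n). -/
open scoped BigOperators
open Finset

noncomputable section

/-- `sig k t n` = sigma_k(n/t) if t divides n, else 0. -/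
def sig (k t n : ℕ) : ℚ := if t ∣ n then (ArithmeticFunction.sigma k (n / t) : ℚ) else 0

/-- Convolution sum `W a b n = ∑ sigma(l) sigma(m)` over positive `l, m` with `a*l + b*m = n`. -/
def W (a b n : ℕ) : ℚ :=
  ∑ l ∈ Finset.Icc 1 n, ∑ m ∈ Finset.Icc 1 n,
    if a * l + b * m = n then
      (ArithmeticFunction.sigma 1 l : ℚ) * (ArithmeticFunction.sigma 1 m : ℚ)
    else 0

/-- `Lt t` is `L(q^t)` where `L(q) = 1 - 24 ∑_{n≥1} sigma(n) q^n`. -/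
def Lt (t : ℕ) : PowerSeries ℚ :=
  PowerSeries.mk fun n =>
    if n = 0 then 1
    else if t ∣ n then -24 * (ArithmeticFunction.sigma 1 (n / t) : ℚ) else 0

/-!
Write `L(q^t) = 1 - 24 S_t` with `S_t = ∑ σ(m) q^(tm)` (`sigmaSeries t`). The coefficient of
`qⁿ` in `S_a S_b` is `W_{(a,b)}(n)`, and `S_a` is `S_1` with `q ↦ q^a`, so
`W_{(a,a)}(n) = W_{(1,1)}(n/a)`. Expanding the square, the claim reduces to Besge's formula
`12 W_{(1,1)}(n) = 5σ₃(n) + (1 - 6n)σ(n)`.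

Besge's formula follows by Liouville's method: `W_{(1,1)}(n) = ∑ ab` over the positive solutions
`(a, b, x, y)` of `ax + by = n`. The shears `(a, b, x, y) ↦ (a + b, b, x, y - x)` (from `x < y` onto
`b < a`) and `(a, b, x, y) ↦ (a, a + b, x - y, y)` (from `y < x` onto `a < b`), together with the
symmetries `(a, b, x, y) ↦ (b, a, y, x)` and `(a, b, x, y) ↦ (x, y, a, b)`, turn
`4 ∑ ab = ∑ (a + b)² - ∑ (a - b)²` into sums over the diagonals `x = y` and `a = b`, which are
explicit divisor sums.
-/

open PowerSeries
open scoped ArithmeticFunction.sigma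

theorem Finset.sum_eq_sum_filter_lt_add_sum_filter_gt_add_sum_filter_eq {ι β M : Type*}
    [LinearOrder β] [AddCommMonoid M] (s : Finset ι) (u v : ι → β) (f : ι → M) :
    ∑ i ∈ s, f i = ∑ i ∈ s with u i < v i, f i + ∑ i ∈ s with v i < u i, f i
      + ∑ i ∈ s with u i = v i, f i := by
  rw [← sum_filter_add_sum_filter_not s (fun i => u i < v i), add_assoc,
    ← sum_filter_add_sum_filter_not (s.filter fun i => ¬ u i < v i) (fun i => v i < u i),
    filter_filter, filter_filter]
  congr 3 <;> exact filter_congr fun i _ => by grind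

theorem sum_Ico_one_sq (d : ℕ) :
    ∑ a ∈ Ico 1 d, (a : ℚ) ^ 2 = ((d : ℚ) - 1) * d * (2 * d - 1) / 6 := by
  induction d with
  | zero => simp
  | succ d ih =>
    rcases Nat.eq_zero_or_pos d with rfl | hd
    · simp
    · rw [sum_Ico_succ_top hd, ih]
      push_cast
      ring

namespace Besge

variable {M : Type*} [AddCommMonoid M]

abbrev qa (q : ℕ × ℕ × ℕ × ℕ) : ℕ := q.1
abbrev qb (q : ℕ × ℕ × ℕ × ℕ) : ℕ := q.2.1
abbrev qx (q : ℕ × ℕ × ℕ × ℕ) : ℕ := q.2.2.1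
abbrev qy (q : ℕ × ℕ × ℕ × ℕ) : ℕ := q.2.2.2

def quadruples (n : ℕ) : Finset (ℕ × ℕ × ℕ × ℕ) :=
  {q ∈ Icc 1 n ×ˢ Icc 1 n ×ˢ Icc 1 n ×ˢ Icc 1 n | qa q * qx q + qb q * qy q = n}

theorem mem_quadruples {n a b x y : ℕ} :
    (a, b, x, y) ∈ quadruples n ↔ 0 < a ∧ 0 < b ∧ 0 < x ∧ 0 < y ∧ a * x + b * y = n := by
  simp only [quadruples, mem_filter, mem_product, mem_Icc]
  constructor
  · rintro ⟨⟨⟨ha, -⟩, ⟨hb, -⟩, ⟨hx, -⟩, ⟨hy, -⟩⟩, h⟩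
    exact ⟨ha, hb, hx, hy, h⟩
  · rintro ⟨ha, hb, hx, hy, rfl⟩
    refine ⟨⟨⟨ha, ?_⟩, ⟨hb, ?_⟩, ⟨hx, ?_⟩, ⟨hy, ?_⟩⟩, rfl⟩ <;> nlinarith

theorem sum_quadruples_swap (n : ℕ) (f : ℕ × ℕ × ℕ × ℕ → M) :
    ∑ q ∈ quadruples n, f (qb q, qa q, qy q, qx q) = ∑ q ∈ quadruples n, f q := by
  have hmem : ∀ q ∈ quadruples n, (qb q, qa q, qy q, qx q) ∈ quadruples n := by
    rintro ⟨a, b, x, y⟩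
    simp only [mem_quadruples, qa, qb, qx, qy]
    omega
  exact sum_nbij' _ _ hmem hmem (fun _ _ => rfl) (fun _ _ => rfl) (fun _ _ => rfl)

theorem sum_quadruples_transpose (n : ℕ) (f : ℕ × ℕ × ℕ × ℕ → M) :
    ∑ q ∈ quadruples n, f (qx q, qy q, qa q, qb q) = ∑ q ∈ quadruples n, f q := by
  have hmem : ∀ q ∈ quadruples n, (qx q, qy q, qa q, qb q) ∈ quadruples n := by
    rintro ⟨a, b, x, y⟩
    simp only [mem_quadruples, qa, qb, qx, qy]
    rintro ⟨ha, hb, hx, hy, h⟩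
    exact ⟨hx, hy, ha, hb, by linarith⟩
  exact sum_nbij' _ _ hmem hmem (fun _ _ => rfl) (fun _ _ => rfl) (fun _ _ => rfl)

theorem sum_quadruples_shear_left (n : ℕ) (f : ℕ × ℕ × ℕ × ℕ → M) :
    ∑ q ∈ quadruples n with qx q < qy q, f (qa q + qb q, qb q, qx q, qy q - qx q)
      = ∑ q ∈ quadruples n with qb q < qa q, f q := by
  refine sum_nbij' (fun q => (qa q + qb q, qb q, qx q, qy q - qx q))
    (fun q => (qa q - qb q, qb q, qx q, qy q + qx q)) ?_ ?_ ?_ ?_ (fun _ _ => rfl)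
  all_goals
    rintro ⟨a, b, x, y⟩ h
    simp only [mem_filter, mem_quadruples, Prod.mk.injEq, true_and, qa, qb, qx, qy] at h ⊢
    obtain ⟨⟨ha, hb, hx, hy, hn⟩, hlt⟩ := h
  · refine ⟨⟨by omega, hb, hx, by omega, ?_⟩, by omega⟩
    zify [hlt.le] at hn ⊢
    linear_combination hn
  · refine ⟨⟨by omega, hb, hx, by omega, ?_⟩, by omega⟩
    zify [hlt.le] at hn ⊢
    linear_combination hn
  all_goals omega

theorem sum_quadruples_shear_right (n : ℕ) (f : ℕ × ℕ × ℕ × ℕ → M) :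
    ∑ q ∈ quadruples n with qy q < qx q, f (qa q, qa q + qb q, qx q - qy q, qy q)
      = ∑ q ∈ quadruples n with qa q < qb q, f q := by
  refine sum_nbij' (fun q => (qa q, qa q + qb q, qx q - qy q, qy q))
    (fun q => (qa q, qb q - qa q, qx q + qy q, qy q)) ?_ ?_ ?_ ?_ (fun _ _ => rfl)
  all_goals
    rintro ⟨a, b, x, y⟩ h
    simp only [mem_filter, mem_quadruples, Prod.mk.injEq, true_and, and_true, qa, qb, qx, qy] at h ⊢
    obtain ⟨⟨ha, hb, hx, hy, hn⟩, hlt⟩ := h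
  · refine ⟨⟨ha, by omega, by omega, hy, ?_⟩, by omega⟩
    zify [hlt.le] at hn ⊢
    linear_combination hn
  · refine ⟨⟨ha, by omega, by omega, hy, ?_⟩, by omega⟩
    zify [hlt.le] at hn ⊢
    linear_combination hn
  all_goals omega

theorem sum_quadruples_filter_x_eq_y (n : ℕ) (f : ℕ × ℕ × ℕ × ℕ → M) :
    ∑ q ∈ quadruples n with qx q = qy q, f q
      = ∑ d ∈ n.divisors, ∑ a ∈ Ico 1 d, f (a, d - a, n / d, n / d) := by
  rw [sum_sigma']
  refine sum_nbij' (fun q => ⟨qa q + qb q, qa q⟩) (fun p => (p.2, p.1 - p.2, n / p.1, n / p.1))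
    ?_ ?_ ?_ ?_ ?_
  all_goals first
    | rintro ⟨a, b, x, y⟩ h
      simp only [mem_filter, mem_quadruples, qx, qy] at h
      obtain ⟨⟨ha, hb, hx, -, rfl⟩, rfl : x = y⟩ := h
      have hdiv : (a * x + b * x) / (a + b) = x := by
        rw [← add_mul, Nat.mul_div_cancel_left _ (by omega)]
    | rintro ⟨d, a⟩ h
      simp only [mem_sigma, Nat.mem_divisors, mem_Ico] at h
      obtain ⟨⟨⟨k, rfl⟩, hn⟩, ha, had⟩ := h
      have hk : d * k / d = k := Nat.mul_div_cancel_left _ (by omega)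
      have hk0 : 0 < k := Nat.pos_of_ne_zero (right_ne_zero_of_mul hn)
  · simp only [mem_sigma, Nat.mem_divisors, mem_Ico, qa, qb]
    exact ⟨⟨⟨x, by ring⟩, by positivity⟩, ha, by omega⟩
  · simp only [mem_filter, mem_quadruples, hk, and_true]
    refine ⟨ha, by omega, hk0, hk0, ?_⟩
    rw [← add_mul, Nat.add_sub_cancel' had.le]
  · simp only [hdiv, Nat.add_sub_cancel_left, qa, qb]
  · simp only [Sigma.mk.injEq, heq_eq_eq, and_true, qa, qb]
    omega
  · simp only [hdiv, Nat.add_sub_cancel_left, qa, qb]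

theorem sum_quadruples_sub_sq (n : ℕ) :
    ∑ q ∈ quadruples n, ((qa q : ℚ) - qb q) ^ 2
      = ∑ q ∈ quadruples n with qy q < qx q, (qb q : ℚ) ^ 2
        + ∑ q ∈ quadruples n with qx q < qy q, (qa q : ℚ) ^ 2 := by
  have hdiag : ∑ q ∈ quadruples n with qa q = qb q, ((qa q : ℚ) - qb q) ^ 2 = 0 :=
    sum_eq_zero fun q hq => by simp [(mem_filter.mp hq).2]
  rw [sum_eq_sum_filter_lt_add_sum_filter_gt_add_sum_filter_eq _ qa qb, hdiag, add_zero,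
    ← sum_quadruples_shear_left, ← sum_quadruples_shear_right]
  congr 1 <;> refine sum_congr rfl fun q _ => ?_ <;> dsimp only [qa, qb] <;> push_cast <;> ring

theorem sum_quadruples_add_sq (n : ℕ) :
    ∑ q ∈ quadruples n, ((qa q : ℚ) + qb q) ^ 2
      = ∑ q ∈ quadruples n with qb q < qa q, (qa q : ℚ) ^ 2
        + ∑ q ∈ quadruples n with qa q < qb q, (qb q : ℚ) ^ 2
        + ∑ q ∈ quadruples n with qx q = qy q, ((qa q : ℚ) + qb q) ^ 2 := by
  rw [sum_eq_sum_filter_lt_add_sum_filter_gt_add_sum_filter_eq _ qx qy,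
    ← sum_quadruples_shear_left, ← sum_quadruples_shear_right]
  congr 2 <;> refine sum_congr rfl fun q _ => ?_ <;> dsimp only [qa, qb] <;> push_cast <;> ring

theorem four_mul_sum_quadruples_mul (n : ℕ) :
    4 * ∑ q ∈ quadruples n, (qa q * qb q : ℚ)
      = 2 * ∑ q ∈ quadruples n with qx q = qy q, (qa q : ℚ) ^ 2
        - 2 * ∑ q ∈ quadruples n with qa q = qb q, (qa q : ℚ) ^ 2
        + ∑ q ∈ quadruples n with qx q = qy q, ((qa q : ℚ) + qb q) ^ 2 := by
  have hpolar : 4 * ∑ q ∈ quadruples n, (qa q * qb q : ℚ)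
      = ∑ q ∈ quadruples n, ((qa q : ℚ) + qb q) ^ 2
        - ∑ q ∈ quadruples n, ((qa q : ℚ) - qb q) ^ 2 := by
    rw [mul_sum, ← sum_sub_distrib]
    exact sum_congr rfl fun q _ => by ring
  have hswap_ab : ∑ q ∈ quadruples n with qa q < qb q, (qb q : ℚ) ^ 2
      = ∑ q ∈ quadruples n with qb q < qa q, (qa q : ℚ) ^ 2 := by
    simpa only [sum_filter] using
      sum_quadruples_swap n fun q => if qb q < qa q then (qa q : ℚ) ^ 2 else 0
  have hswap_xy : ∑ q ∈ quadruples n with qy q < qx q, (qb q : ℚ) ^ 2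
      = ∑ q ∈ quadruples n with qx q < qy q, (qa q : ℚ) ^ 2 := by
    simpa only [sum_filter] using
      sum_quadruples_swap n fun q => if qx q < qy q then (qa q : ℚ) ^ 2 else 0
  have hshear : ∑ q ∈ quadruples n with qy q < qx q, (qa q : ℚ) ^ 2
      = ∑ q ∈ quadruples n with qa q < qb q, (qa q : ℚ) ^ 2 :=
    sum_quadruples_shear_right n fun q => (qa q : ℚ) ^ 2
  have hsplit_ab := sum_eq_sum_filter_lt_add_sum_filter_gt_add_sum_filter_eq (quadruples n) qa qb
    fun q => (qa q : ℚ) ^ 2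
  have hsplit_xy := sum_eq_sum_filter_lt_add_sum_filter_gt_add_sum_filter_eq (quadruples n) qx qy
    fun q => (qa q : ℚ) ^ 2
  linarith [sum_quadruples_sub_sq n, sum_quadruples_add_sq n]

theorem twelve_mul_sum_quadruples_mul (n : ℕ) :
    12 * ∑ q ∈ quadruples n, (qa q * qb q : ℚ) = 5 * σ 3 n + (1 - 6 * n) * σ 1 n := by
  have hsq : ∑ q ∈ quadruples n with qx q = qy q, (qa q : ℚ) ^ 2
      = ∑ d ∈ n.divisors, ((d : ℚ) - 1) * d * (2 * d - 1) / 6 := by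
    rw [sum_quadruples_filter_x_eq_y]
    exact sum_congr rfl fun d _ => sum_Ico_one_sq d
  have hsum_sq : ∑ q ∈ quadruples n with qx q = qy q, ((qa q : ℚ) + qb q) ^ 2
      = ∑ d ∈ n.divisors, ((d : ℚ) - 1) * d ^ 2 := by
    rw [sum_quadruples_filter_x_eq_y]
    refine sum_congr rfl fun d hd => ?_
    have hconst : ∀ a ∈ Ico 1 d, ((a : ℚ) + ↑(d - a)) ^ 2 = (d : ℚ) ^ 2 := fun a ha => by
      rw [Nat.cast_sub (mem_Ico.mp ha).2.le]
      ring
    rw [sum_congr rfl hconst, sum_const, Nat.card_Ico, nsmul_eq_mul,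
      Nat.cast_sub (Nat.pos_of_mem_divisors hd)]
    push_cast
    ring
  have hdiag : ∑ q ∈ quadruples n with qa q = qb q, (qa q : ℚ) ^ 2
      = ∑ d ∈ n.divisors, ((n : ℚ) * d - d ^ 2) := by
    have htranspose : ∑ q ∈ quadruples n with qa q = qb q, (qa q : ℚ) ^ 2
        = ∑ q ∈ quadruples n with qx q = qy q, (qx q : ℚ) ^ 2 := by
      simpa only [sum_filter] using
        (sum_quadruples_transpose n fun q => if qa q = qb q then (qa q : ℚ) ^ 2 else 0).symm
    rw [htranspose, sum_quadruples_filter_x_eq_y,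
      ← Nat.sum_div_divisors n fun d => (n : ℚ) * d - d ^ 2]
    refine sum_congr rfl fun d hd => ?_
    have hmul : (d : ℚ) * (n / d : ℕ) = n := by
      exact_mod_cast Nat.mul_div_cancel' (Nat.dvd_of_mem_divisors hd)
    dsimp only [qx]
    rw [sum_const, Nat.card_Ico, nsmul_eq_mul, Nat.cast_sub (Nat.pos_of_mem_divisors hd)]
    push_cast
    linear_combination ((n / d : ℕ) : ℚ) * hmul
  have hσ (k : ℕ) : (σ k n : ℚ) = ∑ d ∈ n.divisors, (d : ℚ) ^ k := by
    simp [ArithmeticFunction.sigma_apply]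
  have h4 := four_mul_sum_quadruples_mul n
  rw [hsq, hsum_sq, hdiag] at h4
  rw [show (12 : ℚ) * _ = 3 * (4 * _) by ring, h4, hσ, hσ]
  simp only [mul_sum, ← sum_sub_distrib, ← sum_add_distrib]
  exact sum_congr rfl fun d _ => by ring

theorem sum_quadruples_mul_eq_sum_antidiagonal (n : ℕ) :
    ∑ q ∈ quadruples n, (qa q * qb q : ℚ) = ∑ p ∈ antidiagonal n, (σ 1 p.1 : ℚ) * σ 1 p.2 := by
  have hσ (m : ℕ) : (σ 1 m : ℚ) = ∑ i ∈ m.divisorsAntidiagonal, (i.1 : ℚ) := by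
    rw [Nat.sum_divisorsAntidiagonal fun a _ => (a : ℚ), ArithmeticFunction.sigma_one_apply]
    push_cast
    rfl
  simp only [hσ, sum_mul_sum, ← sum_product']
  rw [sum_sigma']
  refine sum_nbij' (fun q => ⟨(qa q * qx q, qb q * qy q), ((qa q, qx q), (qb q, qy q))⟩)
    (fun r => (r.2.1.1, r.2.2.1, r.2.1.2, r.2.2.2)) ?_ ?_ ?_ ?_ (fun _ _ => rfl)
  · rintro ⟨a, b, x, y⟩ h
    simp only [mem_quadruples] at h
    obtain ⟨ha, hb, hx, hy, rfl⟩ := h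
    simp only [mem_sigma, HasAntidiagonal.mem_antidiagonal, mem_product,
      Nat.mem_divisorsAntidiagonal, true_and, qa, qb, qx, qy]
    exact ⟨by positivity, by positivity⟩
  · rintro ⟨⟨l, m⟩, ⟨a, x⟩, ⟨b, y⟩⟩ h
    simp only [mem_sigma, HasAntidiagonal.mem_antidiagonal, mem_product,
      Nat.mem_divisorsAntidiagonal] at h
    obtain ⟨rfl, ⟨rfl, hl⟩, ⟨rfl, hm⟩⟩ := h
    rw [mem_quadruples]
    exact ⟨Nat.pos_of_ne_zero (left_ne_zero_of_mul hl), Nat.pos_of_ne_zero (left_ne_zero_of_mul hm),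
      Nat.pos_of_ne_zero (right_ne_zero_of_mul hl), Nat.pos_of_ne_zero (right_ne_zero_of_mul hm),
      rfl⟩
  · rintro ⟨a, b, x, y⟩ _
    rfl
  · rintro ⟨⟨l, m⟩, ⟨a, x⟩, ⟨b, y⟩⟩ h
    simp only [mem_sigma, HasAntidiagonal.mem_antidiagonal, mem_product,
      Nat.mem_divisorsAntidiagonal] at h
    obtain ⟨rfl, ⟨rfl, -⟩, ⟨rfl, -⟩⟩ := h
    rfl

end Besge

theorem twelve_mul_sum_antidiagonal_sigma_mul_sigma (n : ℕ) :
    12 * ∑ p ∈ antidiagonal n, (σ 1 p.1 : ℚ) * σ 1 p.2 = 5 * σ 3 n + (1 - 6 * n) * σ 1 n := by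
  rw [← Besge.sum_quadruples_mul_eq_sum_antidiagonal, Besge.twelve_mul_sum_quadruples_mul]

theorem sig_one_left (k n : ℕ) : sig k 1 n = σ k n := by
  simp [sig]

theorem sig_mul_left {t : ℕ} (ht : 0 < t) (k m : ℕ) : sig k t (t * m) = σ k m := by
  simp [sig, Nat.mul_div_cancel_left _ ht]

theorem exists_pos_mul_eq_of_sig_ne_zero {k t i : ℕ} (h : sig k t i ≠ 0) :
    ∃ m, 0 < m ∧ t * m = i := by
  unfold sig at h
  split_ifs at h with hdvd
  · obtain ⟨m, rfl⟩ := hdvd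
    refine ⟨m, Nat.pos_of_ne_zero ?_, rfl⟩
    rintro rfl
    simp at h
  · exact absurd rfl h

def sigmaSeries (t : ℕ) : PowerSeries ℚ := PowerSeries.mk (sig 1 t)

theorem coeff_sigmaSeries (t n : ℕ) : coeff n (sigmaSeries t) = sig 1 t n :=
  coeff_mk _ _

theorem constantCoeff_sigmaSeries (t : ℕ) : constantCoeff (sigmaSeries t) = 0 := by
  simp [← coeff_zero_eq_constantCoeff_apply, coeff_sigmaSeries, sig]

theorem Lt_eq_one_sub_sigmaSeries (t : ℕ) : Lt t = 1 - 24 * sigmaSeries t := by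
  ext n
  rw [map_sub, ← map_ofNat C 24, coeff_C_mul, coeff_sigmaSeries, coeff_one, Lt, coeff_mk, sig]
  split_ifs <;> simp_all

theorem sigmaSeries_eq_expand {t : ℕ} (ht : t ≠ 0) :
    sigmaSeries t = expand t ht (sigmaSeries 1) := by
  ext n
  rw [coeff_expand, coeff_sigmaSeries, coeff_sigmaSeries, sig_one_left, sig]

theorem coeff_sigmaSeries_mul {a b : ℕ} (ha : 0 < a) (hb : 0 < b) (n : ℕ) :
    coeff n (sigmaSeries a * sigmaSeries b) = W a b n := by
  rw [coeff_mul, W, ← sum_product', ← sum_filter]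
  symm
  refine sum_bij_ne_zero (fun r _ _ => (a * r.1, b * r.2)) ?_ ?_ ?_ ?_
  · rintro ⟨l, m⟩ h -
    simpa only [mem_filter, HasAntidiagonal.mem_antidiagonal] using (mem_filter.mp h).2
  · rintro ⟨l, m⟩ - - ⟨l', m'⟩ - - h
    simp only [Prod.mk.injEq] at h
    rw [Nat.eq_of_mul_eq_mul_left ha h.1, Nat.eq_of_mul_eq_mul_left hb h.2]
  · rintro ⟨i, j⟩ hij h
    rw [HasAntidiagonal.mem_antidiagonal] at hij
    rw [coeff_sigmaSeries, coeff_sigmaSeries] at h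
    obtain ⟨l, hl, rfl⟩ := exists_pos_mul_eq_of_sig_ne_zero (left_ne_zero_of_mul h)
    obtain ⟨m, hm, rfl⟩ := exists_pos_mul_eq_of_sig_ne_zero (right_ne_zero_of_mul h)
    refine ⟨(l, m), ?_, ?_, rfl⟩
    · simp only [mem_filter, mem_product, mem_Icc]
      refine ⟨⟨⟨hl, ?_⟩, hm, ?_⟩, hij⟩ <;> nlinarith
    · rwa [sig_mul_left ha, sig_mul_left hb] at h
  · rintro ⟨l, m⟩ - -
    simp only [coeff_sigmaSeries, sig_mul_left ha, sig_mul_left hb]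

theorem coeff_sigmaSeries_one_mul_self (n : ℕ) :
    coeff n (sigmaSeries 1 * sigmaSeries 1) = ∑ p ∈ antidiagonal n, (σ 1 p.1 : ℚ) * σ 1 p.2 := by
  simp only [coeff_mul, coeff_sigmaSeries, sig_one_left]

theorem twelve_mul_W_self {a : ℕ} (ha : 0 < a) (n : ℕ) :
    12 * a * W a a n = a * (5 * sig 3 a n + sig 1 a n) - 6 * n * sig 1 a n := by
  rw [← coeff_sigmaSeries_mul ha ha, sigmaSeries_eq_expand ha.ne', ← map_mul, coeff_expand]
  by_cases hdvd : a ∣ n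
  · obtain ⟨m, rfl⟩ := hdvd
    rw [if_pos (dvd_mul_right a m), Nat.mul_div_cancel_left _ ha, coeff_sigmaSeries_one_mul_self,
      sig_mul_left ha, sig_mul_left ha]
    push_cast
    linear_combination (a : ℚ) * twelve_mul_sum_antidiagonal_sigma_mul_sigma m
  · simp [hdvd, sig]

theorem L_alpha_beta_sq_general (α β : ℕ) (hα : 0 < α) (hlt : α < β) :
    PowerSeries.constantCoeff (((α : PowerSeries ℚ) * Lt α - (β : PowerSeries ℚ) * Lt β) ^ 2)
        = ((α : ℚ) - (β : ℚ)) ^ 2 ∧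
    ∀ n : ℕ, 1 ≤ n →
      PowerSeries.coeff n (((α : PowerSeries ℚ) * Lt α - (β : PowerSeries ℚ) * Lt β) ^ 2) =
        240 * (α : ℚ) ^ 2 * sig 3 α n + 240 * (β : ℚ) ^ 2 * sig 3 β n
        + 48 * (α : ℚ) * ((β : ℚ) - 6 * (n : ℚ)) * sig 1 α n
        + 48 * (β : ℚ) * ((α : ℚ) - 6 * (n : ℚ)) * sig 1 β n
        - 1152 * (α : ℚ) * (β : ℚ) * W α β n := by
  have hβ : 0 < β := hα.trans hlt
  have hexpand : ((α : PowerSeries ℚ) * Lt α - (β : PowerSeries ℚ) * Lt β) ^ 2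
      = C (((α : ℚ) - β) ^ 2) - C (48 * ((α : ℚ) - β) * α) * sigmaSeries α
        + C (48 * ((α : ℚ) - β) * β) * sigmaSeries β
        + C (576 * (α : ℚ) ^ 2) * (sigmaSeries α * sigmaSeries α)
        - C (1152 * (α : ℚ) * β) * (sigmaSeries α * sigmaSeries β)
        + C (576 * (β : ℚ) ^ 2) * (sigmaSeries β * sigmaSeries β) := by
    simp only [Lt_eq_one_sub_sigmaSeries, map_mul, map_sub, map_pow, map_natCast, map_ofNat]
    ring
  rw [hexpand]
  refine ⟨?_, fun n hn => ?_⟩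
  · simp only [map_add, map_sub, map_mul, constantCoeff_C, constantCoeff_sigmaSeries]
    ring
  · simp only [map_add, map_sub, coeff_C_mul, coeff_C, if_neg (by omega : n ≠ 0),
      coeff_sigmaSeries, coeff_sigmaSeries_mul hα hβ, coeff_sigmaSeries_mul hα hα,
      coeff_sigmaSeries_mul hβ hβ]
    linear_combination 48 * (α : ℚ) * twelve_mul_W_self hα n + 48 * (β : ℚ) * twelve_mul_W_self hβ n

theorem L_alpha_beta_sq (α β : ℕ) (hα : 0 < α) (hco : Nat.gcd α β = 1) (hlt : α < β) :
    PowerSeries.constantCoeff (((α : PowerSeries ℚ) * Lt α - (β : PowerSeries ℚ) * Lt β) ^ 2)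
        = ((α : ℚ) - (β : ℚ)) ^ 2 ∧
    ∀ n : ℕ, 1 ≤ n →
      PowerSeries.coeff n (((α : PowerSeries ℚ) * Lt α - (β : PowerSeries ℚ) * Lt β) ^ 2) =
        240 * (α : ℚ) ^ 2 * sig 3 α n + 240 * (β : ℚ) ^ 2 * sig 3 β n
        + 48 * (α : ℚ) * ((β : ℚ) - 6 * (n : ℚ)) * sig 1 α n
        + 48 * (β : ℚ) * ((α : ℚ) - 6 * (n : ℚ)) * sig 1 β n
        - 1152 * (α : ℚ) * (β : ℚ) * W α β n :=
  L_alpha_beta_sq_general α β hα hlt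
end
end

section
/- The fifteen formal power series A₁, …, A₁₅ ∈ ℚ⟦q⟧ are linearly independent over ℚ: if x₁, …, x₁₅ ∈ ℚ satisfy ∑_{i=1}^{15} x_i A_i = 0 in ℚ⟦q⟧, then x_i = 0 for all 1 ≤ i ≤ 15. -/
open scoped BigOperators
open Finset

noncomputable section

/-- Integer power of a formal power series (negative exponents via the inverse). -/
def zp (f : PowerSeries ℚ) (r : ℤ) : PowerSeries ℚ :=
  if 0 ≤ r then f ^ r.toNat else f⁻¹ ^ (-r).toNat

def d44 : Fin 6 → ℕ := ![1, 2, 4, 11, 22, 44]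

def r44 : Fin 15 → Fin 6 → ℤ :=
  ![![6, -2, 0, 6, -2, 0], ![4, 0, 0, 4, 0, 0], ![2, 2, 0, 2, 2, 0], ![0, 4, 0, 0, 4, 0],
    ![-2, 6, 0, -2, 6, 0], ![0, 2, 2, 0, 2, 2], ![0, -3, 5, 0, 5, 1], ![0, 0, 4, 0, 0, 4],
    ![3, 0, 1, -1, 0, 5], ![0, -2, 6, 0, -2, 6], ![1, -3, 4, -3, 5, 4], ![2, 0, 0, 2, -4, 8],
    ![0, 2, 0, 0, -2, 8], ![-3, 9, 0, 1, 1, 0], ![0, 0, 2, 0, -4, 10]]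

def e44 (i : Fin 15) : ℕ := ((∑ δ, (d44 δ : ℤ) * r44 i δ) / 24).toNat

/-- The eta quotient `A_{i+1} = q^{e_i} · ∏_{m≥1} ∏_{δ ∣ 44} (1 - q^{δ m})^{r(i,δ)}`; since the
factors with `δ m > n` do not affect the coefficient of `q^n`, the coefficient of `q^n` is
computed from the product truncated at `m ≤ n`. -/
def A (i : Fin 15) : PowerSeries ℚ :=
  PowerSeries.mk fun n =>
    PowerSeries.coeff n
      (PowerSeries.X ^ e44 i *
        ∏ m ∈ Finset.Icc 1 n, ∏ δ : Fin 6,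
          zp (1 - PowerSeries.X ^ (d44 δ * m)) (r44 i δ))

/-- `a i n` is the coefficient of `q^n` in `A_{i+1}`. -/
def a (i : Fin 15) (n : ℕ) : ℚ := PowerSeries.coeff n (A i)

/-!
Lean's `A i` is `A_{i+1}`. Each `A i` has order `e44 i`, and these orders are `1, …, 13, 2, 15`:
all distinct except that `A 13` and `A 1` both have order `2`. Power series of pairwise distinct
orders are linearly independent, which settles the fourteen series other than `A 13`. The series
`A 13` is separated from them by a linear functional on the coefficients of `q^1, …, q^14` that vanishes on
all the other `A j` but not on `A 13`. The finitely many coefficients this needs are computed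
exactly: modulo `q^(N+1)` the factors with `δ m > N` are `1`, and the remaining finite product is
evaluated as integer lists by the kernel.
-/

open PowerSeries

theorem PowerSeries.linearIndependent_of_injective_order {R ι : Type*} [Ring R]
    [NoZeroDivisors R] {f : ι → R⟦X⟧} (hf : ∀ i, f i ≠ 0)
    (horder : Function.Injective fun i => (f i).order) : LinearIndependent R f := by
  classical
  rw [linearIndependent_iff']
  intro s g hsum i hi
  by_contra hgi
  obtain ⟨i₀, hi₀, hmin⟩ := (s.filter fun i => g i ≠ 0).exists_min_image (fun i => (f i).order)
    ⟨i, Finset.mem_filter.mpr ⟨hi, hgi⟩⟩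
  rw [Finset.mem_filter] at hi₀
  set n := (f i₀).order.toNat
  have hn : ((n : ℕ) : ℕ∞) = (f i₀).order :=
    ENat.natCast_toNat (order_finite_iff_ne_zero.mpr (hf i₀)).ne
  have hcoeff := congrArg (coeff n) hsum
  rw [map_sum, map_zero, Finset.sum_eq_single_of_mem i₀ hi₀.1] at hcoeff
  · exact mul_ne_zero hi₀.2 (coeff_order (hf i₀)) hcoeff
  intro j hj hne
  by_cases hgj : g j = 0
  · simp [hgj]
  have hlt : (n : ℕ∞) < (f j).order :=
    hn ▸ (hmin j (Finset.mem_filter.mpr ⟨hj, hgj⟩)).lt_of_ne fun h => hne (horder h).symm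
  rw [LinearMap.map_smul, coeff_of_lt_order n hlt, smul_zero]

theorem LinearIndepOn.insert_of_linearMap {K V ι : Type*} [DivisionRing K] [AddCommGroup V]
    [Module K V] {v : ι → V} {s : Set ι} {x : ι} (hs : LinearIndepOn K v s) (φ : V →ₗ[K] K)
    (hφs : ∀ i ∈ s, φ (v i) = 0) (hφx : φ (v x) ≠ 0) : LinearIndepOn K v (insert x s) := by
  refine hs.insert fun hx => hφx ?_
  have : Submodule.span K (v '' s) ≤ LinearMap.ker φ :=
    Submodule.span_le.mpr <| Set.image_subset_iff.mpr hφs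
  exact this hx

theorem PowerSeries.inv_one_sub_X_pow {K : Type*} [Field K] {j : ℕ} (hj : 0 < j) :
    (1 - X ^ j : K⟦X⟧)⁻¹ = mk fun n => if j ∣ n then 1 else 0 := by
  rw [inv_eq_iff_mul_eq_one (by simp [hj.ne'])]
  ext n
  simp only [mul_sub, mul_one, mul_comm _ (X ^ j), map_sub, coeff_mk, coeff_X_pow_mul', coeff_one]
  rcases Nat.eq_zero_or_pos n with rfl | hn
  · simp [hj.ne']
  by_cases hjn : j ≤ n
  · have : j ∣ n - j ↔ j ∣ n := Nat.dvd_sub_iff_left hjn dvd_rfl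
    simp [hjn, hn.ne', this]
  · have : ¬j ∣ n := fun h => hjn (Nat.le_of_dvd hn h)
    simp [hjn, hn.ne', this]

theorem PowerSeries.coeff_eq_of_mk_eq {R : Type*} [CommRing R] {n N : ℕ} (hn : n ≤ N)
    {f g : R⟦X⟧} (h : Ideal.Quotient.mk (Ideal.span {X ^ (N + 1)}) f = Ideal.Quotient.mk _ g) :
    coeff n f = coeff n g := by
  rw [Ideal.Quotient.eq, Ideal.mem_span_singleton, X_pow_dvd_iff] at h
  rw [← sub_eq_zero, ← map_sub]
  exact h n (Nat.lt_succ_of_le hn)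

theorem mk_zp_eq_one {I : Ideal ℚ⟦X⟧} {f : ℚ⟦X⟧} (hf₀ : constantCoeff f ≠ 0)
    (hf : Ideal.Quotient.mk I f = 1) (r : ℤ) : Ideal.Quotient.mk I (zp f r) = 1 := by
  have hinv : Ideal.Quotient.mk I f⁻¹ = 1 := by
    simpa [hf] using congrArg (Ideal.Quotient.mk I) (PowerSeries.mul_inv_cancel f hf₀)
  unfold zp
  split_ifs <;> simp [hf, hinv]

theorem mk_zp_one_sub_X_pow_eq_one {N k : ℕ} (hk : N < k) (r : ℤ) :
    Ideal.Quotient.mk (Ideal.span {X ^ (N + 1)}) (zp (1 - X ^ k) r) = 1 := by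
  refine mk_zp_eq_one (by simp [(N.zero_le.trans_lt hk).ne']) ?_ r
  rw [map_sub, map_one, sub_eq_self, Ideal.Quotient.eq_zero_iff_mem, Ideal.mem_span_singleton]
  exact pow_dvd_pow X hk

theorem constantCoeff_zp {f : ℚ⟦X⟧} (hf : constantCoeff f = 1) (r : ℤ) :
    constantCoeff (zp f r) = 1 := by
  unfold zp
  split_ifs <;> simp [constantCoeff_inv, hf]

namespace CoeffList

def add : List ℤ → List ℤ → List ℤ
  | [], l' => l'
  | a :: l, [] => a :: l
  | a :: l, b :: l' => (a + b) :: add l l'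

def mul : List ℤ → List ℤ → List ℤ
  | [], _ => []
  | a :: l, l' => add (l'.map (a * ·)) (0 :: mul l l')

def mulTrunc (N : ℕ) (l l' : List ℤ) : List ℤ := (mul l l').take (N + 1)

def powTrunc (N : ℕ) (l : List ℤ) : ℕ → List ℤ
  | 0 => [1]
  | t + 1 => mulTrunc N l (powTrunc N l t)

def ofFun (N : ℕ) (g : ℕ → ℤ) : List ℤ := (List.range (N + 1)).map g

def oneSubXPow (N k : ℕ) : List ℤ :=
  ofFun N fun n => (if n = 0 then 1 else 0) - if n = k then 1 else 0

def invOneSubXPow (N k : ℕ) : List ℤ := ofFun N fun n => if k ∣ n then 1 else 0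

def zpOneSubXPow (N k : ℕ) (r : ℤ) : List ℤ :=
  if N < k then [1]
  else if 0 ≤ r then powTrunc N (oneSubXPow N k) r.toNat
  else powTrunc N (invOneSubXPow N k) (-r).toNat

theorem getD_add (l l' : List ℤ) (k : ℕ) : (add l l').getD k 0 = l.getD k 0 + l'.getD k 0 := by
  induction l generalizing l' k with
  | nil => rw [add, List.getD_nil, zero_add]
  | cons a l ih =>
    cases l' with
    | nil => rw [add, List.getD_nil, add_zero]
    | cons b l' =>
      cases k with
      | zero => simp only [add, List.getD_cons_zero]
      | succ k => simp only [add, List.getD_cons_succ, ih]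

theorem getD_map_mul (a : ℤ) (l : List ℤ) (k : ℕ) : (l.map (a * ·)).getD k 0 = a * l.getD k 0 := by
  simpa only [mul_zero] using List.getD_map l 0 (a * ·)

theorem getD_mul (l l' : List ℤ) (k : ℕ) :
    (mul l l').getD k 0 = ∑ i ∈ Finset.range (k + 1), l.getD i 0 * l'.getD (k - i) 0 := by
  induction l generalizing k with
  | nil => simp [mul]
  | cons a l ih =>
    rw [mul, getD_add, Finset.sum_range_succ']
    cases k with
    | zero => simp only [getD_map_mul, List.getD_cons_zero, Finset.sum_range_zero, Nat.sub_zero,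
        add_zero, zero_add]
    | succ k =>
      simp only [getD_map_mul, List.getD_cons_succ, List.getD_cons_zero, ih, Nat.sub_zero,
        Nat.succ_sub_succ]
      ring

theorem getD_mulTrunc {N k : ℕ} (hk : k ≤ N) (l l' : List ℤ) :
    (mulTrunc N l l').getD k 0 = ∑ i ∈ Finset.range (k + 1), l.getD i 0 * l'.getD (k - i) 0 := by
  rw [mulTrunc, List.getD_eq_getElem?_getD, List.getElem?_take_of_lt (by omega),
    ← List.getD_eq_getElem?_getD, getD_mul]

theorem getD_ofFun {N k : ℕ} (hk : k ≤ N) (g : ℕ → ℤ) : (ofFun N g).getD k 0 = g k := by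
  rw [ofFun, List.getD_eq_getElem?_getD, List.getElem?_map, List.getElem?_range (by omega)]
  rfl

end CoeffList

def IsTruncation (N : ℕ) (f : ℚ⟦X⟧) (l : List ℤ) : Prop :=
  ∀ k ≤ N, coeff k f = l.getD k 0

namespace IsTruncation

variable {N : ℕ} {f g : ℚ⟦X⟧} {l l' : List ℤ}

theorem of_coeff {c : ℕ → ℤ} (h : ∀ k ≤ N, coeff k f = c k) :
    IsTruncation N f (CoeffList.ofFun N c) := fun k hk => by
  rw [h k hk, CoeffList.getD_ofFun hk]

theorem one : IsTruncation N 1 [1] := by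
  rintro (_ | k) _ <;> simp [coeff_one]

theorem of_mk_eq_one (hf : Ideal.Quotient.mk (Ideal.span {X ^ (N + 1)}) f = 1) :
    IsTruncation N f [1] := fun k hk => by
  rw [coeff_eq_of_mk_eq hk (hf.trans (map_one _).symm), one k hk]

theorem mul (hf : IsTruncation N f l) (hg : IsTruncation N g l') :
    IsTruncation N (f * g) (CoeffList.mulTrunc N l l') := by
  intro k hk
  rw [CoeffList.getD_mulTrunc hk, coeff_mul, Finset.Nat.sum_antidiagonal_eq_sum_range_succ_mk]
  push_cast
  refine Finset.sum_congr rfl fun i hi => ?_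
  have hik : i ≤ k := Nat.lt_succ_iff.mp (Finset.mem_range.mp hi)
  rw [hf i (hik.trans hk), hg (k - i) ((Nat.sub_le k i).trans hk)]

theorem pow (hf : IsTruncation N f l) : ∀ t, IsTruncation N (f ^ t) (CoeffList.powTrunc N l t)
  | 0 => by rw [pow_zero]; exact one
  | t + 1 => by rw [pow_succ']; exact hf.mul (pow hf t)

theorem list_prod {ι : Type*} {F : ι → ℚ⟦X⟧} {G : ι → List ℤ} :
    ∀ L : List ι, (∀ x ∈ L, IsTruncation N (F x) (G x)) →
      IsTruncation N (L.map F).prod ((L.map G).foldr (CoeffList.mulTrunc N) [1])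
  | [], _ => by simpa using one
  | x :: L, h => by
    simp only [List.map_cons, List.prod_cons, List.foldr_cons]
    exact (h x List.mem_cons_self).mul (list_prod L fun y hy => h y (List.mem_cons_of_mem x hy))

theorem zp_one_sub_X_pow {k : ℕ} (hk : 0 < k) (r : ℤ) :
    IsTruncation N (zp (1 - X ^ k) r) (CoeffList.zpOneSubXPow N k r) := by
  unfold CoeffList.zpOneSubXPow
  split_ifs with hNk hr
  · exact of_mk_eq_one (mk_zp_one_sub_X_pow_eq_one hNk r)
  · rw [zp, if_pos hr]
    refine (of_coeff fun n _ => ?_).pow _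
    simp only [map_sub, coeff_one, coeff_X_pow]
    split_ifs <;> simp
  · rw [zp, if_neg hr, inv_one_sub_X_pow hk]
    refine (of_coeff fun n _ => ?_).pow _
    rw [coeff_mk]
    split_ifs <;> simp

end IsTruncation

theorem d44_pos (δ : Fin 6) : 0 < d44 δ := by
  fin_cases δ <;> decide

def etaProd (i : Fin 15) (N : ℕ) : ℚ⟦X⟧ :=
  X ^ e44 i * ∏ m ∈ Finset.Icc 1 N, ∏ δ : Fin 6, zp (1 - X ^ (d44 δ * m)) (r44 i δ)

theorem coeff_A (i : Fin 15) (n : ℕ) : coeff n (A i) = coeff n (etaProd i n) :=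
  coeff_mk _ _

theorem coeff_etaProd_of_le (i : Fin 15) {n N : ℕ} (hn : n ≤ N) :
    coeff n (etaProd i N) = coeff n (etaProd i n) := by
  apply coeff_eq_of_mk_eq le_rfl
  have hsplit : etaProd i N = etaProd i n *
      ∏ m ∈ Finset.Ioc n N, ∏ δ : Fin 6, zp (1 - X ^ (d44 δ * m)) (r44 i δ) := by
    rw [etaProd, etaProd, mul_assoc, ← Nat.zero_add 1, Finset.Icc_add_one_left_eq_Ioc,
      Finset.Icc_add_one_left_eq_Ioc, Finset.prod_Ioc_consecutive _ n.zero_le hn]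
  rw [hsplit, map_mul, map_prod, Finset.prod_eq_one, mul_one]
  intro m hm
  rw [map_prod]
  refine Finset.prod_eq_one fun δ _ => mk_zp_one_sub_X_pow_eq_one ?_ _
  exact (Finset.mem_Ioc.mp hm).1.trans_le (Nat.le_mul_of_pos_left m (d44_pos δ))

theorem order_A (i : Fin 15) : (A i).order = e44 i := by
  rw [order_eq_nat]
  simp only [coeff_A, etaProd, coeff_X_pow_mul']
  refine ⟨?_, fun k hk => if_neg (by omega)⟩
  rw [if_pos le_rfl, Nat.sub_self, coeff_zero_eq_constantCoeff_apply, map_prod,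
    Finset.prod_eq_one fun m hm => ?_]
  · exact one_ne_zero
  rw [map_prod]
  refine Finset.prod_eq_one fun δ _ => constantCoeff_zp ?_ _
  simp [(Nat.mul_pos (d44_pos δ) (Finset.mem_Icc.mp hm).1).ne']

theorem A_ne_zero (i : Fin 15) : A i ≠ 0 := fun h => by
  simpa [h] using order_A i

theorem e44_injOn : Set.InjOn e44 {13}ᶜ := by
  have : ∀ i j : Fin 15, i ≠ 13 → j ≠ 13 → e44 i = e44 j → i = j := by decide
  exact fun i hi j hj => this i j hi hj

def etaList (N : ℕ) (i : Fin 15) : List ℤ :=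
  CoeffList.mulTrunc N (CoeffList.ofFun N fun n => if n = e44 i then 1 else 0)
    (((List.range' 1 N).map fun m =>
      ((List.finRange 6).map fun δ => CoeffList.zpOneSubXPow N (d44 δ * m) (r44 i δ)).foldr
        (CoeffList.mulTrunc N) [1]).foldr (CoeffList.mulTrunc N) [1])

theorem isTruncation_etaProd (N : ℕ) (i : Fin 15) :
    IsTruncation N (etaProd i N) (etaList N i) := by
  refine (IsTruncation.of_coeff fun n _ => by simp [coeff_X_pow]).mul ?_
  rw [Nat.Icc_eq_range', Finset.prod]
  simp only [Multiset.map_coe, Multiset.prod_coe, Nat.add_sub_cancel]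
  refine IsTruncation.list_prod _ fun m hm => ?_
  rw [Fin.prod_univ_def]
  refine IsTruncation.list_prod _ fun δ _ => IsTruncation.zp_one_sub_X_pow ?_ _
  exact Nat.mul_pos (d44_pos δ) (List.mem_range'_1.mp hm).1

theorem coeff_A_eq_getD_etaList (i : Fin 15) {n N : ℕ} (hn : n ≤ N) :
    coeff n (A i) = (etaList N i).getD n 0 := by
  rw [coeff_A, ← coeff_etaProd_of_le i hn, isTruncation_etaProd N i n hn]

/-- The coefficients of `q^1, …, q^14` of the `A j` with `j ≠ 13` form a `14 × 14` matrix of rank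
`13` (pivots at `q^1, …, q^13`; the row of `A 14` vanishes); this vector spans its kernel. -/
def separatingCoeffs : List ℤ := [0, 83, 20, -27, -3, 6, -3, 17, 4, -11, -1, 4, 1, 0, 1]

def separatingFunctional : ℚ⟦X⟧ →ₗ[ℚ] ℚ :=
  ∑ n ∈ Finset.range 15, (separatingCoeffs.getD n 0 : ℚ) • coeff n

theorem separatingFunctional_A (j : Fin 15) :
    separatingFunctional (A j) = if j = 13 then -396 else 0 := by
  have hcomp : ∀ j : Fin 15, ∑ n ∈ Finset.range 15,
      separatingCoeffs.getD n 0 * (etaList 14 j).getD n 0 = if j = 13 then -396 else 0 := by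
    decide +kernel
  simp only [separatingFunctional, LinearMap.sum_apply, LinearMap.smul_apply, smul_eq_mul]
  rw [Finset.sum_congr rfl fun n hn => by
    rw [coeff_A_eq_getD_etaList j (Nat.lt_succ_iff.mp (Finset.mem_range.mp hn))]]
  exact_mod_cast hcomp j

theorem linearIndependent_A : LinearIndependent ℚ A := by
  have hrest : LinearIndepOn ℚ A {13}ᶜ :=
    PowerSeries.linearIndependent_of_injective_order (fun i => A_ne_zero i) fun i j h =>
      Subtype.ext <| e44_injOn i.2 j.2 <| by simpa [order_A] using h
  have hall := hrest.insert_of_linearMap (x := 13) separatingFunctional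
    (fun j hj => by simp [separatingFunctional_A, Set.mem_compl_singleton_iff.mp hj])
    (by simp [separatingFunctional_A])
  rwa [Set.insert_eq, Set.union_compl_self, linearIndepOn_univ_iff] at hall

theorem A_linearIndependent (x : Fin 15 → ℚ)
    (h : ∑ i, x i • A i = 0) : ∀ i, x i = 0 :=
  Fintype.linearIndependent_iff.mp linearIndependent_A x h
end
end
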